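/- Let Δ ⊆ ℝ² be the convex hull of (0,0), (1,0), (0,1), let f₁(x,y) = (x + y/2, y/2) and f₂(x,y) = (y/2, 1 − x − y/2), and let μ be the Borel probability measure on ℝ² defined by μ(B) = 2·L(B ∩ Δ), where L is two-dimensional Lebesgue measure. Then μ is an invariant measure of the probabilistic IFS with probabilities (1/2, 1/2): (1/2)·μ∘f₁⁻¹ + (1/2)·μ∘f₂⁻¹ = μ. -/

import Mathlib

/-!
`f₁` and `f₂` are affine maps whose linear parts have determinant `1/2`, so each pushes
Lebesgue measure forward to twice Lebesgue measure. They map `Δ` onto its two halves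
`Δ₁ = Δ ∩ {y ≤ x}` and `Δ₂ = Δ ∩ {x ≤ y}`, hence `μ∘fᵢ⁻¹ = 4·L|Δᵢ`. The halves cover `Δ` and
meet only in a segment of the diagonal, which is Lebesgue-null, so averaging gives `2·L|Δ = μ`.
-/

open Set MeasureTheory ENNReal

/-- The Barnsley–Vince map `f₁(x,y) = (x + y/2, y/2)`. -/
noncomputable def f1 : ℝ × ℝ → ℝ × ℝ := fun v => (v.1 + v.2 / 2, v.2 / 2)

/-- The Barnsley–Vince map `f₂(x,y) = (y/2, 1 − x − y/2)`. -/
noncomputable def f2 : ℝ × ℝ → ℝ × ℝ := fun v => (v.2 / 2, 1 - v.1 - v.2 / 2)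

/-- The filled triangle with vertices `(0,0)`, `(1,0)`, `(0,1)`. -/
def Δ : Set (ℝ × ℝ) := convexHull ℝ {(0, 0), (1, 0), (0, 1)}

/-- The normalized Lebesgue measure on `Δ`: `μ(B) = 2·L(B ∩ Δ)`. -/
noncomputable def μBV : Measure (ℝ × ℝ) := (2 : ℝ≥0∞) • volume.restrict Δ

section AffineHaar

variable {E : Type*} [NormedAddCommGroup E] [NormedSpace ℝ E] [MeasurableSpace E] [BorelSpace E]
  [FiniteDimensional ℝ E] (μ : Measure E) [μ.IsAddHaarMeasure]

theorem map_linearMap_add_const_addHaar {L : E →ₗ[ℝ] E} (hL : LinearMap.det L ≠ 0) (b : E) :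
    μ.map (fun x ↦ L x + b) = ENNReal.ofReal |(LinearMap.det L)⁻¹| • μ := by
  rw [show (fun x ↦ L x + b) = (· + b) ∘ L from rfl,
    ← Measure.map_map (measurable_add_const b) L.continuous_of_finiteDimensional.measurable,
    Measure.map_linearMap_addHaar_eq_smul_addHaar μ hL, Measure.map_smul, map_add_right_eq_self]

theorem map_restrict_preimage_linearMap_add_const {L : E →ₗ[ℝ] E} (hL : LinearMap.det L ≠ 0)
    (b : E) {s : Set E} (hs : MeasurableSet s) :
    (μ.restrict ((fun x ↦ L x + b) ⁻¹' s)).map (fun x ↦ L x + b) =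
      ENNReal.ofReal |(LinearMap.det L)⁻¹| • μ.restrict s := by
  rw [← Measure.restrict_map
    (L.continuous_of_finiteDimensional.measurable.add_const b) hs,
    map_linearMap_add_const_addHaar μ hL, Measure.restrict_smul]

end AffineHaar

noncomputable def planeLinearMap (a b c d : ℝ) : ℝ × ℝ →ₗ[ℝ] ℝ × ℝ :=
  Matrix.toLin (Module.Basis.finTwoProd ℝ) (Module.Basis.finTwoProd ℝ) !![a, b; c, d]

@[simp]
theorem planeLinearMap_apply (a b c d : ℝ) (v : ℝ × ℝ) :
    planeLinearMap a b c d v = (a * v.1 + b * v.2, c * v.1 + d * v.2) := by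
  simp [planeLinearMap, Matrix.toLin_apply, Matrix.mulVec, dotProduct, Fin.sum_univ_two]

theorem det_planeLinearMap (a b c d : ℝ) :
    LinearMap.det (planeLinearMap a b c d) = a * d - b * c := by
  rw [planeLinearMap, LinearMap.det_toLin, Matrix.det_fin_two_of]

theorem volume_setOf_fst_eq_snd : volume {p : ℝ × ℝ | p.1 = p.2} = 0 := by
  set diagonal := LinearMap.ker (LinearMap.fst ℝ ℝ ℝ - LinearMap.snd ℝ ℝ ℝ)
  have h_eq : {p : ℝ × ℝ | p.1 = p.2} = diagonal := by
    ext p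
    simp [diagonal, sub_eq_zero]
  have h_ne_top : diagonal ≠ ⊤ := fun h ↦ by
    have : ((1 : ℝ), (0 : ℝ)) ∈ diagonal := h ▸ Submodule.mem_top
    simp [diagonal] at this
  rw [h_eq]
  exact Measure.addHaar_submodule volume diagonal h_ne_top

theorem mem_Δ_iff (p : ℝ × ℝ) : p ∈ Δ ↔ 0 ≤ p.1 ∧ 0 ≤ p.2 ∧ p.1 + p.2 ≤ 1 := by
  set T := {q : ℝ × ℝ | 0 ≤ q.1 ∧ 0 ≤ q.2 ∧ q.1 + q.2 ≤ 1}
  have hT : Convex ℝ T := by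
    rintro q ⟨hq₁, hq₂, hq₃⟩ r ⟨hr₁, hr₂, hr₃⟩ s t hs ht hst
    simp only [T, mem_ofPred_eq, Prod.fst_add, Prod.snd_add, Prod.smul_fst, Prod.smul_snd,
      smul_eq_mul]
    exact ⟨by positivity, by positivity, by nlinarith⟩
  constructor
  · exact fun hp ↦ convexHull_min (by rintro q (rfl | rfl | rfl) <;> norm_num [T]) hT hp
  · rintro ⟨h₁, h₂, h₃⟩
    have h_nonneg : ∀ i ∈ Finset.univ, 0 ≤ ![1 - p.1 - p.2, p.1, p.2] i := by
      intro i _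
      fin_cases i <;> simp <;> linarith
    have := (convex_convexHull ℝ ({(0, 0), (1, 0), (0, 1)} : Set (ℝ × ℝ))).sum_mem
      (z := ![(0, 0), (1, 0), (0, 1)]) h_nonneg (by simp [Fin.sum_univ_three]; ring)
      (fun i _ ↦ subset_convexHull ℝ _ (by fin_cases i <;> simp))
    simpa [Δ, Fin.sum_univ_three] using this

theorem measurableSet_Δ : MeasurableSet Δ :=
  ((toFinite _).isCompact_convexHull ℝ).isClosed.measurableSet

def Δ₁ : Set (ℝ × ℝ) := Δ ∩ {p | p.2 ≤ p.1}

def Δ₂ : Set (ℝ × ℝ) := Δ ∩ {p | p.1 ≤ p.2}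

theorem measurableSet_Δ₁ : MeasurableSet Δ₁ :=
  measurableSet_Δ.inter (measurableSet_le measurable_snd measurable_fst)

theorem measurableSet_Δ₂ : MeasurableSet Δ₂ :=
  measurableSet_Δ.inter (measurableSet_le measurable_fst measurable_snd)

theorem Δ₁_union_Δ₂ : Δ₁ ∪ Δ₂ = Δ := by
  rw [Δ₁, Δ₂, ← inter_union_distrib_left, inter_eq_left]
  exact fun p _ ↦ le_total p.2 p.1

theorem aedisjoint_Δ₁_Δ₂ : AEDisjoint volume Δ₁ Δ₂ :=
  measure_mono_null (fun _ ⟨⟨_, h₁⟩, ⟨_, h₂⟩⟩ ↦ le_antisymm h₂ h₁) volume_setOf_fst_eq_snd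

theorem f1_eq_planeLinearMap_add :
    f1 = fun v ↦ planeLinearMap 1 (1 / 2) 0 (1 / 2) v + 0 := by
  ext v <;> simp [f1] <;> ring

theorem f2_eq_planeLinearMap_add :
    f2 = fun v ↦ planeLinearMap 0 (1 / 2) (-1) (-1 / 2) v + (0, 1) := by
  ext v <;> simp [f2] <;> ring

theorem f1_preimage_Δ₁ : f1 ⁻¹' Δ₁ = Δ := by
  ext p
  simp only [Δ₁, f1, mem_preimage, mem_inter_iff, mem_Δ_iff, mem_ofPred_eq]
  constructor
  · rintro ⟨⟨h₁, h₂, h₃⟩, h₄⟩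
    exact ⟨by linarith, by linarith, by linarith⟩
  · rintro ⟨h₁, h₂, h₃⟩
    exact ⟨⟨by linarith, by linarith, by linarith⟩, by linarith⟩

theorem f2_preimage_Δ₂ : f2 ⁻¹' Δ₂ = Δ := by
  ext p
  simp only [Δ₂, f2, mem_preimage, mem_inter_iff, mem_Δ_iff, mem_ofPred_eq]
  constructor
  · rintro ⟨⟨h₁, h₂, h₃⟩, h₄⟩
    exact ⟨by linarith, by linarith, by linarith⟩
  · rintro ⟨h₁, h₂, h₃⟩
    exact ⟨⟨by linarith, by linarith, by linarith⟩, by linarith⟩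

theorem map_f1_restrict_Δ :
    (volume.restrict Δ).map f1 = (2 : ℝ≥0∞) • volume.restrict Δ₁ := by
  rw [← f1_preimage_Δ₁, f1_eq_planeLinearMap_add,
    map_restrict_preimage_linearMap_add_const volume (by norm_num [det_planeLinearMap]) _
      measurableSet_Δ₁, det_planeLinearMap]
  norm_num

theorem map_f2_restrict_Δ :
    (volume.restrict Δ).map f2 = (2 : ℝ≥0∞) • volume.restrict Δ₂ := by
  rw [← f2_preimage_Δ₂, f2_eq_planeLinearMap_add,
    map_restrict_preimage_linearMap_add_const volume (by norm_num [det_planeLinearMap]) _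
      measurableSet_Δ₂, det_planeLinearMap]
  norm_num

/-- The normalized Lebesgue measure on `Δ` is invariant for the probabilistic IFS
`((f₁, 1/2), (f₂, 1/2))`: `(1/2)·μ∘f₁⁻¹ + (1/2)·μ∘f₂⁻¹ = μ`. -/
theorem normalized_lebesgue_invariant :
    (2 : ℝ≥0∞)⁻¹ • μBV.map f1 + (2 : ℝ≥0∞)⁻¹ • μBV.map f2 = μBV := by
  rw [μBV, Measure.map_smul, Measure.map_smul, map_f1_restrict_Δ, map_f2_restrict_Δ,
    ← smul_add, ← smul_add, ← smul_add,
    ← Measure.restrict_union₀ aedisjoint_Δ₁_Δ₂ measurableSet_Δ₂.nullMeasurableSet, Δ₁_union_Δ₂,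
    smul_smul, ENNReal.inv_mul_cancel two_ne_zero ofNat_ne_top, one_smul]
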